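/- arXiv:1501.07654 — 3 statements merged into one kernel-verified Lean document; each statement's English description precedes it below -/
import Mathlib

section
/- Let V be a finite-dimensional real vector space, B a symmetric bilinear form on V of signature (1, dim V − 1), B_ℂ its complex-bilinear extension to the complexification V_ℂ = ℂ ⊗ V, and z ↦ z̄ the natural conjugation on V_ℂ. If ω ∈ V satisfies B(ω,ω) > 0, then for every z ∈ V_ℂ the product B_ℂ(z,ω)·B_ℂ(z̄,ω) is real and satisfies B_ℂ(z,ω)·B_ℂ(z̄,ω) ≥ B_ℂ(z, z̄)·B(ω,ω), with equality if and only if z is a complex scalar multiple of ω. -/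
/-! If `B` is negative definite on a hyperplane `W` and `B ω ω > 0`, then `ω ∉ W`, so
`V = W ⊕ ℝω`; writing a vector `u` orthogonal to `ω` as `w + c ω` gives
`B u u = B w w - c² B ω ω < 0` unless `u = 0`. Applied to `u = B(ω,ω) v - B(v,ω) ω`, for which
`B u u = B(ω,ω) (B(ω,ω) B(v,v) - B(v,ω)²)`, this is the reverse Cauchy–Schwarz inequality
`B(v,v) B(ω,ω) ≤ B(v,ω)²`, strict unless `v ∈ ℝω`. Writing `z = x + i y` with `x, y ∈ V`, the two
sides of the complex inequality are the real numbers `B(x,ω)² + B(y,ω)²` and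
`(B(x,x) + B(y,y)) B(ω,ω)`, so it is the sum of the real inequalities for `x` and `y`. -/

open TensorProduct ComplexOrder

/-- The natural conjugation `z ⊗ v ↦ z̄ ⊗ v` on the complexification `ℂ ⊗[ℝ] V`. -/
noncomputable def conjVc (V : Type*) [AddCommGroup V] [Module ℝ V] :
    ℂ ⊗[ℝ] V →ₗ[ℝ] ℂ ⊗[ℝ] V :=
  TensorProduct.map Complex.conjAe.toLinearMap LinearMap.id

namespace LinearMap.BilinForm

variable {K V : Type*} [Field K] [LinearOrder K] [IsStrictOrderedRing K]
  [AddCommGroup V] [Module K V]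

theorem apply_self_lt_zero_of_apply_eq_zero {B : LinearMap.BilinForm K V} (hB : B.IsSymm)
    {W : Submodule K V} (hW : IsCoatom W) (hneg : ∀ w ∈ W, w ≠ 0 → B w w < 0)
    {ω u : V} (hω : 0 < B ω ω) (hu : B u ω = 0) (hu₀ : u ≠ 0) : B u u < 0 := by
  have hωW : ω ∉ W := fun h ↦ (hneg ω h (by rintro rfl; simp at hω)).not_gt hω
  have hu_mem : u ∈ W ⊔ K ∙ ω := by
    simp [(Submodule.isCompl_span_singleton_of_isCoatom_of_notMem hW hωW).sup_eq_top]
  obtain ⟨w, hw, _, hc, rfl⟩ := Submodule.mem_sup.mp hu_mem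
  obtain ⟨c, rfl⟩ := Submodule.mem_span_singleton.mp hc
  simp only [map_add, map_smul, LinearMap.add_apply, LinearMap.smul_apply, smul_eq_mul] at hu
  have hwω : B w ω = -c * B ω ω := by linear_combination hu
  have hw₀ : w ≠ 0 := by
    rintro rfl
    have hc : c = 0 := by simpa [hω.ne'] using hwω
    simp [hc] at hu₀
  have hww := hneg w hw hw₀
  have hωw : B ω w = B w ω := hB.eq ω w
  simp only [map_add, map_smul, LinearMap.add_apply, LinearMap.smul_apply, smul_eq_mul, hωw,
    hwω] at hww ⊢
  nlinarith [sq_nonneg c]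

theorem sq_apply_eq_mul_apply_self_of_mem_span {R V : Type*} [CommRing R] [AddCommGroup V]
    [Module R V] (B : LinearMap.BilinForm R V) {ω v : V} (hv : v ∈ R ∙ ω) :
    B v ω ^ 2 = B v v * B ω ω := by
  obtain ⟨s, rfl⟩ := Submodule.mem_span_singleton.mp hv
  simp only [map_smul, LinearMap.smul_apply, smul_eq_mul]
  ring

theorem mul_apply_self_lt_sq_of_notMem_span {B : LinearMap.BilinForm K V} (hB : B.IsSymm)
    {W : Submodule K V} (hW : IsCoatom W) (hneg : ∀ w ∈ W, w ≠ 0 → B w w < 0)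
    {ω v : V} (hω : 0 < B ω ω) (hv : v ∉ K ∙ ω) : B v v * B ω ω < B v ω ^ 2 := by
  set u := B ω ω • v - B v ω • ω
  have hu₀ : u ≠ 0 := fun hu ↦ hv <| by
    rw [sub_eq_zero] at hu
    rw [← inv_smul_smul₀ hω.ne' v, hu, smul_smul]
    exact Submodule.smul_mem _ _ (Submodule.mem_span_singleton_self ω)
  have huω : B u ω = 0 := by simp [u, mul_comm]
  have huu : B u u = B ω ω * (B ω ω * B v v - B v ω ^ 2) := by
    simp only [u, map_sub, map_smul, LinearMap.sub_apply, LinearMap.smul_apply, smul_eq_mul,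
      hB.eq ω v]
    ring
  have := apply_self_lt_zero_of_apply_eq_zero hB hW hneg hω huω hu₀
  rw [huu] at this
  linarith [neg_of_mul_neg_right this hω.le]

theorem mul_apply_self_le_sq {B : LinearMap.BilinForm K V} (hB : B.IsSymm)
    {W : Submodule K V} (hW : IsCoatom W) (hneg : ∀ w ∈ W, w ≠ 0 → B w w < 0)
    {ω : V} (hω : 0 < B ω ω) (v : V) : B v v * B ω ω ≤ B v ω ^ 2 := by
  by_cases hv : v ∈ K ∙ ω
  · exact (sq_apply_eq_mul_apply_self_of_mem_span B hv).ge
  · exact (mul_apply_self_lt_sq_of_notMem_span hB hW hneg hω hv).le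

end LinearMap.BilinForm

open LinearMap.BilinForm

section Complexification

open Complex

variable {V : Type*} [AddCommGroup V] [Module ℝ V]

theorem tmul_eq_one_tmul_add_I_tmul (c : ℂ) (v : V) :
    c ⊗ₜ[ℝ] v = (1 : ℂ) ⊗ₜ (c.re • v) + I ⊗ₜ (c.im • v) := by
  rw [tmul_smul, tmul_smul, smul_tmul', smul_tmul', ← add_tmul, real_smul, real_smul, mul_one,
    re_add_im]

theorem exists_eq_one_tmul_add_I_tmul (z : ℂ ⊗[ℝ] V) :
    ∃ x y : V, z = (1 : ℂ) ⊗ₜ x + I ⊗ₜ y := by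
  induction z with
  | zero => exact ⟨0, 0, by simp⟩
  | tmul c v => exact ⟨_, _, tmul_eq_one_tmul_add_I_tmul c v⟩
  | add z₁ z₂ h₁ h₂ =>
    obtain ⟨x₁, y₁, rfl⟩ := h₁
    obtain ⟨x₂, y₂, rfl⟩ := h₂
    exact ⟨x₁ + x₂, y₁ + y₂, by rw [tmul_add, tmul_add]; abel⟩

theorem conjVc_one_tmul_add_I_tmul (x y : V) :
    conjVc V ((1 : ℂ) ⊗ₜ x + I ⊗ₜ y) = (1 : ℂ) ⊗ₜ x + I ⊗ₜ (-y) := by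
  simp [conjVc, tmul_neg, neg_tmul]

theorem baseChange_one_tmul_add_I_tmul_one_tmul (B : LinearMap.BilinForm ℝ V) (x y ω : V) :
    B.baseChange ℂ ((1 : ℂ) ⊗ₜ x + I ⊗ₜ y) ((1 : ℂ) ⊗ₜ ω) = ⟨B x ω, B y ω⟩ := by
  apply Complex.ext <;> simp [baseChange_tmul]

theorem baseChange_one_tmul_add_I_tmul_conjVc {B : LinearMap.BilinForm ℝ V} (hB : B.IsSymm)
    (x y : V) :
    B.baseChange ℂ ((1 : ℂ) ⊗ₜ x + I ⊗ₜ y) (conjVc V ((1 : ℂ) ⊗ₜ x + I ⊗ₜ y)) =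
      (B x x + B y y : ℝ) := by
  rw [conjVc_one_tmul_add_I_tmul]
  apply Complex.ext <;> simp [baseChange_tmul, hB.eq y x]

theorem baseChange_mul_conjVc (B : LinearMap.BilinForm ℝ V) (x y ω : V) :
    B.baseChange ℂ ((1 : ℂ) ⊗ₜ x + I ⊗ₜ y) ((1 : ℂ) ⊗ₜ ω) *
      B.baseChange ℂ (conjVc V ((1 : ℂ) ⊗ₜ x + I ⊗ₜ y)) ((1 : ℂ) ⊗ₜ ω) =
      (B x ω ^ 2 + B y ω ^ 2 : ℝ) := by
  rw [conjVc_one_tmul_add_I_tmul, baseChange_one_tmul_add_I_tmul_one_tmul,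
    baseChange_one_tmul_add_I_tmul_one_tmul]
  apply Complex.ext <;>
    simp only [mul_re, mul_im, ofReal_re, ofReal_im, map_neg, LinearMap.neg_apply] <;> ring

theorem baseChange_smul_mul_conjVc (B : LinearMap.BilinForm ℝ V) (c : ℂ) (ω : V) :
    B.baseChange ℂ (c • (1 : ℂ) ⊗ₜ ω) ((1 : ℂ) ⊗ₜ ω) *
      B.baseChange ℂ (conjVc V (c • (1 : ℂ) ⊗ₜ ω)) ((1 : ℂ) ⊗ₜ ω) =
      B.baseChange ℂ (c • (1 : ℂ) ⊗ₜ ω) (conjVc V (c • (1 : ℂ) ⊗ₜ ω)) * (B ω ω : ℂ) := by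
  simp only [smul_tmul', smul_eq_mul, mul_one, baseChange_tmul, real_smul, conjVc, map_tmul,
    AlgEquiv.toLinearMap_apply, conjAe_coe, LinearMap.id_coe, id_eq]
  ring

end Complexification

theorem stmt2_general {V : Type*} [AddCommGroup V] [Module ℝ V]
    (B : LinearMap.BilinForm ℝ V) (hsymm : ∀ x y, B x y = B y x)
    (hsig : ∃ (e : V) (W : Submodule ℝ V), IsCompl (Submodule.span ℝ {e}) W ∧
      0 < B e e ∧ (∀ w ∈ W, B e w = 0) ∧ (∀ w ∈ W, w ≠ 0 → B w w < 0))
    (ω : V) (hω : 0 < B ω ω) (z : ℂ ⊗[ℝ] V) :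
    ((B.baseChange ℂ) z ((1 : ℂ) ⊗ₜ[ℝ] ω) * (B.baseChange ℂ) (conjVc V z) ((1 : ℂ) ⊗ₜ[ℝ] ω)).im
      = 0 ∧
    (B.baseChange ℂ) z (conjVc V z) * (B ω ω : ℂ) ≤
      (B.baseChange ℂ) z ((1 : ℂ) ⊗ₜ[ℝ] ω) * (B.baseChange ℂ) (conjVc V z) ((1 : ℂ) ⊗ₜ[ℝ] ω) ∧
    ((B.baseChange ℂ) z ((1 : ℂ) ⊗ₜ[ℝ] ω) * (B.baseChange ℂ) (conjVc V z) ((1 : ℂ) ⊗ₜ[ℝ] ω)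
        = (B.baseChange ℂ) z (conjVc V z) * (B ω ω : ℂ) ↔
      ∃ c : ℂ, z = c • ((1 : ℂ) ⊗ₜ[ℝ] ω)) := by
  obtain ⟨e, W, hcompl, he, -, hneg⟩ := hsig
  have hW : IsCoatom W :=
    hcompl.isAtom_iff_isCoatom.mp (nonzero_span_atom e (by rintro rfl; simp at he))
  have hB : B.IsSymm := ⟨hsymm⟩
  obtain ⟨x, y, hz⟩ := exists_eq_one_tmul_add_I_tmul z
  have hprod := baseChange_mul_conjVc B x y ω
  have hself := baseChange_one_tmul_add_I_tmul_conjVc hB x y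
  rw [← hz] at hprod hself
  have hx := mul_apply_self_le_sq hB hW hneg hω x
  have hy := mul_apply_self_le_sq hB hW hneg hω y
  refine ⟨by rw [hprod, Complex.ofReal_im], ?_, fun heq ↦ ?_, ?_⟩
  · rw [hprod, hself, ← Complex.ofReal_mul, Complex.real_le_real]
    linarith
  · rw [hprod, hself, ← Complex.ofReal_mul, Complex.ofReal_inj] at heq
    have hx' : x ∈ ℝ ∙ ω := by
      by_contra hx'
      linarith [mul_apply_self_lt_sq_of_notMem_span hB hW hneg hω hx']
    have hy' : y ∈ ℝ ∙ ω := by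
      by_contra hy'
      linarith [mul_apply_self_lt_sq_of_notMem_span hB hW hneg hω hy']
    obtain ⟨s, rfl⟩ := Submodule.mem_span_singleton.mp hx'
    obtain ⟨t, rfl⟩ := Submodule.mem_span_singleton.mp hy'
    refine ⟨⟨s, t⟩, ?_⟩
    rw [hz, smul_tmul', smul_eq_mul, mul_one, tmul_eq_one_tmul_add_I_tmul ⟨s, t⟩ ω]
  · rintro ⟨c, rfl⟩
    exact baseChange_smul_mul_conjVc B c ω

/-- Let `V` be a finite-dimensional real vector space, `B` a symmetric bilinear
form on `V` of signature `(1, dim V − 1)`, `B_ℂ = B.baseChange ℂ` its complex-bilinear extension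
to the complexification `ℂ ⊗[ℝ] V`, and `conjVc V` the natural conjugation.  If `ω ∈ V` satisfies
`B ω ω > 0`, then for every `z` in the complexification the product `B_ℂ(z,ω) * B_ℂ(z̄,ω)` is real
and satisfies `B_ℂ(z,ω) * B_ℂ(z̄,ω) ≥ B_ℂ(z,z̄) * B(ω,ω)`, with equality iff `z` is a complex
scalar multiple of `ω`. -/
theorem stmt2 {V : Type*} [AddCommGroup V] [Module ℝ V] [FiniteDimensional ℝ V]
    (B : LinearMap.BilinForm ℝ V) (hsymm : ∀ x y, B x y = B y x)
    (hsig : ∃ (e : V) (W : Submodule ℝ V), IsCompl (Submodule.span ℝ {e}) W ∧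
      0 < B e e ∧ (∀ w ∈ W, B e w = 0) ∧ (∀ w ∈ W, w ≠ 0 → B w w < 0))
    (ω : V) (hω : 0 < B ω ω) (z : ℂ ⊗[ℝ] V) :
    ((B.baseChange ℂ) z ((1 : ℂ) ⊗ₜ[ℝ] ω) * (B.baseChange ℂ) (conjVc V z) ((1 : ℂ) ⊗ₜ[ℝ] ω)).im
      = 0 ∧
    (B.baseChange ℂ) z (conjVc V z) * (B ω ω : ℂ) ≤
      (B.baseChange ℂ) z ((1 : ℂ) ⊗ₜ[ℝ] ω) * (B.baseChange ℂ) (conjVc V z) ((1 : ℂ) ⊗ₜ[ℝ] ω) ∧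
    ((B.baseChange ℂ) z ((1 : ℂ) ⊗ₜ[ℝ] ω) * (B.baseChange ℂ) (conjVc V z) ((1 : ℂ) ⊗ₜ[ℝ] ω)
        = (B.baseChange ℂ) z (conjVc V z) * (B ω ω : ℂ) ↔
      ∃ c : ℂ, z = c • ((1 : ℂ) ⊗ₜ[ℝ] ω)) :=
  stmt2_general B hsymm hsig ω hω z
end

section
/- Let V be a finite-dimensional complex vector space and h a Hermitian sesquilinear form on V of signature (1, dim V − 1). If ω ∈ V satisfies h(ω,ω) > 0, then for every α ∈ V one has h(α,ω)·h(ω,α) ≥ h(α,α)·h(ω,ω) (here h(α,ω)·h(ω,α) = |h(α,ω)|² and h(α,α), h(ω,ω) are real), and equality holds if and only if α is a complex scalar multiple of ω. -/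
/-!
Write `α = β + c • ω` with `β` `h`-orthogonal to `ω`; then
`h α α * h ω ω - h α ω * h ω α = h β β * h ω ω`, so everything reduces to `h` being negative
definite on the orthogonal complement of `ω`. If `β ⊥ ω` were nonzero with `h β β ≥ 0`, the
combination of `β` and `ω` cancelling their `e`-components would lie in `W` while `h` is
nonnegative on it, contradicting negativity of `h` on `W`.
-/

open ComplexOrder

lemma Submodule.exists_sub_smul_mem_of_isCompl_span_singleton {R M : Type*} [Ring R]
    [AddCommGroup M] [Module R M] {e : M} {W : Submodule R M}
    (hW : IsCompl (Submodule.span R {e}) W) (v : M) : ∃ c : R, v - c • e ∈ W := by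
  have hv : v ∈ Submodule.span R {e} ⊔ W := hW.sup_eq_top ▸ Submodule.mem_top
  obtain ⟨s, hs, w, hw, rfl⟩ := Submodule.mem_sup.mp hv
  obtain ⟨c, rfl⟩ := Submodule.mem_span_singleton.mp hs
  exact ⟨c, by simpa using hw⟩

lemma Complex.nonneg_of_conj_eq_of_not_lt_zero {z : ℂ} (hz : starRingEnd ℂ z = z)
    (hz₀ : ¬ z < 0) : 0 ≤ z := by
  obtain ⟨r, rfl⟩ := Complex.conj_eq_iff_real.mp hz
  exact_mod_cast not_lt.mp (by exact_mod_cast hz₀)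

section HermitianForm

variable {V : Type*} [AddCommGroup V] [Module ℂ V] (h : V →ₗ[ℂ] V →ₛₗ[starRingEnd ℂ] ℂ)

lemma apply_smul_add_smul_self_of_orthogonal {β ω : V} (hβω : h β ω = 0) (hωβ : h ω β = 0)
    (s t : ℂ) :
    h (s • β + t • ω) (s • β + t • ω) =
      s * starRingEnd ℂ s * h β β + t * starRingEnd ℂ t * h ω ω := by
  simp only [map_add, map_smul, LinearMap.add_apply, LinearMap.smul_apply, map_smulₛₗ,
    smul_eq_mul, hβω, hωβ]
  ring

lemma apply_sub_div_smul_eq_zero {ω : V} (hω : h ω ω ≠ 0) (α : V) :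
    h (α - (h α ω / h ω ω) • ω) ω = 0 := by
  simp [div_mul_cancel₀ _ hω]

variable {h} (hherm : ∀ x y, starRingEnd ℂ (h x y) = h y x)
include hherm

lemma apply_self_mul_sub_eq_of_ne_zero {ω : V} (hω : h ω ω ≠ 0) (α : V) :
    h α α * h ω ω - h α ω * h ω α =
      h (α - (h α ω / h ω ω) • ω) (α - (h α ω / h ω ω) • ω) * h ω ω := by
  set c := h α ω / h ω ω with hc_def
  have hβω : h (α - c • ω) ω = 0 := apply_sub_div_smul_eq_zero h hω α
  have hωβ : h ω (α - c • ω) = 0 := by rw [← hherm, hβω, map_zero]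
  have hα : α = (1 : ℂ) • (α - c • ω) + c • ω := by module
  have hc : c * starRingEnd ℂ c * h ω ω = h α ω * h ω α / h ω ω := by
    rw [hc_def, map_div₀, hherm, hherm]
    field_simp
  conv_lhs => rw [hα, apply_smul_add_smul_self_of_orthogonal h hβω hωβ, ← hα]
  rw [map_one, hc]
  field_simp
  ring

lemma apply_self_neg_of_orthogonal {e : V} {W : Submodule ℂ V}
    (hW : IsCompl (Submodule.span ℂ {e}) W) (hneg : ∀ w ∈ W, w ≠ 0 → h w w < 0)
    {ω : V} (hω : 0 < h ω ω) {β : V} (hβω : h β ω = 0) (hβ : β ≠ 0) : h β β < 0 := by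
  by_contra hββ
  replace hββ : 0 ≤ h β β := Complex.nonneg_of_conj_eq_of_not_lt_zero (hherm β β) hββ
  have hωβ : h ω β = 0 := by rw [← hherm, hβω, map_zero]
  obtain ⟨l, hl⟩ := Submodule.exists_sub_smul_mem_of_isCompl_span_singleton hW β
  obtain ⟨m, hm⟩ := Submodule.exists_sub_smul_mem_of_isCompl_span_singleton hW ω
  have hmem : m • β + (-l) • ω ∈ W := by
    convert W.sub_mem (W.smul_mem m hl) (W.smul_mem l hm) using 1
    module
  have hself : 0 ≤ h (m • β + (-l) • ω) (m • β + (-l) • ω) := by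
    rw [apply_smul_add_smul_self_of_orthogonal h hβω hωβ]
    exact add_nonneg (mul_nonneg (mul_star_self_nonneg m) hββ)
      (mul_nonneg (mul_star_self_nonneg (-l)) hω.le)
  have hzero : m • β + (-l) • ω = 0 := by
    by_contra hne
    exact (hneg _ hmem hne).not_ge hself
  have hl₀ : l = 0 := by
    have := congrArg (h · ω) hzero
    simp only [map_add, map_smul, LinearMap.add_apply, LinearMap.smul_apply, smul_eq_mul,
      hβω, map_zero, LinearMap.zero_apply, mul_zero, zero_add, mul_eq_zero, neg_eq_zero] at this
    exact this.resolve_right hω.ne'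
  have hm₀ : m = 0 := by
    simpa [hl₀, hβ] using hzero
  have hωW : ω ∈ W := by simpa [hm₀] using hm
  have hω₀ : ω ≠ 0 := by
    rintro rfl
    simp at hω
  exact (hneg ω hωW hω₀).not_gt hω

end HermitianForm

theorem stmt3_general {V : Type*} [AddCommGroup V] [Module ℂ V]
    (h : V →ₗ[ℂ] V →ₛₗ[starRingEnd ℂ] ℂ)
    (hherm : ∀ x y, starRingEnd ℂ (h x y) = h y x)
    (hsig : ∃ (e : V) (W : Submodule ℂ V), IsCompl (Submodule.span ℂ {e}) W ∧
      0 < h e e ∧ (∀ w ∈ W, h e w = 0) ∧ (∀ w ∈ W, w ≠ 0 → h w w < 0))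
    (ω : V) (hω : 0 < h ω ω) (α : V) :
    h α α * h ω ω ≤ h α ω * h ω α ∧
    (h α ω * h ω α = h α α * h ω ω ↔ ∃ c : ℂ, α = c • ω) := by
  obtain ⟨e, W, hW, -, -, hneg⟩ := hsig
  set β := α - (h α ω / h ω ω) • ω
  have hid : h α α * h ω ω - h α ω * h ω α = h β β * h ω ω :=
    apply_self_mul_sub_eq_of_ne_zero hherm hω.ne' α
  have hββ : β ≠ 0 → h β β < 0 :=
    apply_self_neg_of_orthogonal hherm hW hneg hω (apply_sub_div_smul_eq_zero h hω.ne' α)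
  refine ⟨sub_nonpos.mp ?_, ⟨fun heq ↦ ?_, ?_⟩⟩
  · rw [hid]
    rcases eq_or_ne β 0 with hβ | hβ
    · simp [hβ]
    · exact mul_nonpos_of_nonpos_of_nonneg (hββ hβ).le hω.le
  · have hβ₀ : h β β = 0 := by
      rw [heq, sub_self, eq_comm, mul_eq_zero] at hid
      exact hid.resolve_right hω.ne'
    have hβ : β = 0 := by
      by_contra hβ
      exact (hββ hβ).ne hβ₀
    exact ⟨_, sub_eq_zero.mp hβ⟩
  · rintro ⟨c, rfl⟩
    simp only [map_smul, map_smulₛₗ, LinearMap.smul_apply, smul_eq_mul]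
    ring

/-- Let `V` be a finite-dimensional complex vector space and `h` a Hermitian
sesquilinear form on `V` of signature `(1, dim V − 1)`, i.e. `V` admits an `h`-orthogonal direct
sum decomposition `V = ℂe ⊕ W` with `h e e > 0` and `h` negative definite on `W`.  If `ω ∈ V`
satisfies `h ω ω > 0`, then for every `α ∈ V` one has `h α ω * h ω α ≥ h α α * h ω ω`, with
equality iff `α` is a complex scalar multiple of `ω`. -/
theorem stmt3 {V : Type*} [AddCommGroup V] [Module ℂ V] [FiniteDimensional ℂ V]
    (h : V →ₗ[ℂ] V →ₛₗ[starRingEnd ℂ] ℂ)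
    (hherm : ∀ x y, starRingEnd ℂ (h x y) = h y x)
    (hsig : ∃ (e : V) (W : Submodule ℂ V), IsCompl (Submodule.span ℂ {e}) W ∧
      0 < h e e ∧ (∀ w ∈ W, h e w = 0) ∧ (∀ w ∈ W, w ≠ 0 → h w w < 0))
    (ω : V) (hω : 0 < h ω ω) (α : V) :
    h α α * h ω ω ≤ h α ω * h ω α ∧
    (h α ω * h ω α = h α α * h ω ω ↔ ∃ c : ℂ, α = c • ω) :=
  stmt3_general h hherm hsig ω hω α
end

section
/- Under the star-algebra setup, α · α* · Ω = |λ|² · ω^{2p} · Ω + Σ_{i=1}^p α_i · (α_i)* · ω^{2(p−i)} · Ω, where |λ|² = λ·conj(λ). -/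
/-!
Write `α = ∑_{i=0}^p b_i ω^{p-i}` with `b_0 = λ` and `b_i = α_i` for `i ≥ 1`, so that `α*` has
components `b_i*`. In the product `b_i ω^{p-i} · b_j* ω^{p-j} · Ω` with `i < j`, the exponent
`2p - i - j` is at least `2(p - j) + 1`, so the primitivity of `b_j*` (the star of that of
`α_j`, as `ω` and `Ω` are self-adjoint) kills it; symmetrically for `j < i`. Only the
diagonal terms survive.
-/

open Finset

theorem mul_pow_mul_mul_pow_mul_eq_zero_of_lt {R : Type*} [CommSemiring R] {x y ω Ω : R}
    {p i j : ℕ} (hy : y * ω ^ (2 * (p - j) + 1) * Ω = 0) (hij : i < j) (hjp : j ≤ p) :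
    x * ω ^ (p - i) * (y * ω ^ (p - j)) * Ω = 0 := by
  have hexp : p - i = p - j + 1 + (j - i - 1) := by omega
  calc x * ω ^ (p - i) * (y * ω ^ (p - j)) * Ω
      = y * ω ^ (2 * (p - j) + 1) * Ω * (x * ω ^ (j - i - 1)) := by rw [hexp]; ring
    _ = 0 := by rw [hy, zero_mul]

theorem sum_mul_sum_mul_eq_sum_diagonal_of_primitive {R : Type*} [CommSemiring R] {ω Ω : R}
    {p : ℕ} {s : Finset ℕ} (hs : ∀ i ∈ s, i ≤ p) (b c : ℕ → R)
    (hb : ∀ i ∈ s, i ≠ 0 → b i * ω ^ (2 * (p - i) + 1) * Ω = 0)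
    (hc : ∀ i ∈ s, i ≠ 0 → c i * ω ^ (2 * (p - i) + 1) * Ω = 0) :
    (∑ i ∈ s, b i * ω ^ (p - i)) * (∑ j ∈ s, c j * ω ^ (p - j)) * Ω =
      ∑ i ∈ s, b i * c i * ω ^ (2 * (p - i)) * Ω := by
  rw [sum_mul_sum, sum_mul]
  refine sum_congr rfl fun i hi => ?_
  have hoff : ∀ j ∈ s, j ≠ i → b i * ω ^ (p - i) * (c j * ω ^ (p - j)) * Ω = 0 := by
    intro j hj hji
    rcases hji.lt_or_gt with hji | hij
    · rw [show b i * ω ^ (p - i) * (c j * ω ^ (p - j)) * Ω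
          = c j * ω ^ (p - j) * (b i * ω ^ (p - i)) * Ω by ring]
      exact mul_pow_mul_mul_pow_mul_eq_zero_of_lt (hb i hi (by omega)) hji (hs i hi)
    · exact mul_pow_mul_mul_pow_mul_eq_zero_of_lt (hc j hj (by omega)) hij (hs j hj)
  rw [sum_mul, sum_eq_single_of_mem i hi hoff]
  ring

theorem star_mul_pow_mul_eq_zero {R : Type*} [CommSemiring R] [StarRing R] {x ω Ω : R}
    (hω : star ω = ω) (hΩ : star Ω = Ω) {n : ℕ} (h : x * ω ^ n * Ω = 0) :
    star x * ω ^ n * Ω = 0 := by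
  simpa only [star_mul', star_pow, hω, hΩ, star_zero] using congrArg star h

theorem stmt6_general {A : Type*} [CommRing A] [Algebra ℂ A] [StarRing A] [StarModule ℂ A]
    (p : ℕ) (ω Ω : A) (hω : star ω = ω) (hΩ : star Ω = Ω)
    (l : ℂ) (a : ℕ → A)
    (hprim : ∀ i ∈ Finset.Icc 1 p, a i * ω ^ (2 * (p - i) + 1) * Ω = 0)
    (α : A) (hα : α = l • ω ^ p + ∑ i ∈ Finset.Icc 1 p, a i * ω ^ (p - i)) :
    α * star α * Ω = (l * (starRingEnd ℂ) l) • (ω ^ (2 * p) * Ω) +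
      ∑ i ∈ Finset.Icc 1 p, a i * star (a i) * ω ^ (2 * (p - i)) * Ω := by
  set b : ℕ → A := fun i => if i = 0 then algebraMap ℂ A l else a i
  have h0 : (0 : ℕ) ∉ Icc 1 p := by simp
  have hb : ∀ i ∈ Icc 1 p, b i = a i := fun i hi => if_neg (by simp at hi; omega)
  have hs : ∀ i ∈ insert 0 (Icc 1 p), i ≤ p := by simp +contextual
  have hbprim : ∀ i ∈ insert 0 (Icc 1 p), i ≠ 0 → b i * ω ^ (2 * (p - i) + 1) * Ω = 0 := by
    intro i hi hi0
    have hi : i ∈ Icc 1 p := (mem_insert.mp hi).resolve_left hi0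
    rw [hb i hi]
    exact hprim i hi
  have hαb : α = ∑ i ∈ insert 0 (Icc 1 p), b i * ω ^ (p - i) := by
    rw [hα, sum_insert h0]
    congr 1
    · simp [b, Algebra.smul_def]
    · exact sum_congr rfl fun i hi => by rw [hb i hi]
  have hαstar : star α = ∑ i ∈ insert 0 (Icc 1 p), star (b i) * ω ^ (p - i) := by
    simp only [hαb, star_sum, star_mul', star_pow, hω]
  rw [hαstar, hαb,
    sum_mul_sum_mul_eq_sum_diagonal_of_primitive hs b (fun i => star (b i)) hbprim
      fun i hi hi0 => star_mul_pow_mul_eq_zero hω hΩ (hbprim i hi hi0),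
    sum_insert h0, sum_congr rfl fun i hi => by rw [hb i hi]]
  simp [b, ← algebraMap_star_comm, Algebra.smul_def, mul_assoc]

/-- In a commutative star `ℂ`-algebra `A` with `ω* = ω`, `Ω* = Ω`, primitive
elements `a i` (`1 ≤ i ≤ p`) satisfying `a i * ω ^ (2(p−i)+1) * Ω = 0`, and
`α = λ • ω^p + ∑ a i * ω^(p−i)`, one has
`α * α* * Ω = |λ|² • (ω^(2p) * Ω) + ∑ a i * (a i)* * ω^(2(p−i)) * Ω`. -/
theorem stmt6 {A : Type*} [CommRing A] [Algebra ℂ A] [StarRing A] [StarModule ℂ A]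
    (p : ℕ) (hp : 1 ≤ p) (ω Ω : A) (hω : star ω = ω) (hΩ : star Ω = Ω)
    (l : ℂ) (a : ℕ → A)
    (hprim : ∀ i ∈ Finset.Icc 1 p, a i * ω ^ (2 * (p - i) + 1) * Ω = 0)
    (α : A) (hα : α = l • ω ^ p + ∑ i ∈ Finset.Icc 1 p, a i * ω ^ (p - i)) :
    α * star α * Ω = (l * (starRingEnd ℂ) l) • (ω ^ (2 * p) * Ω) +
      ∑ i ∈ Finset.Icc 1 p, a i * star (a i) * ω ^ (2 * (p - i)) * Ω :=
  stmt6_general p ω Ω hω hΩ l a hprim α hα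
end
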